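/- arXiv:2510.10706 — 3 statements merged into one kernel-verified Lean document; each statement's English description precedes it below -/
import Mathlib

section
/- Matching characterization (Proposition 1): Let E(T) = t₁,…,t_{2n} be the Euler string of a tree T over {1,…,m}. A position i with 1 ≤ i ≤ 2n is the outward edge of the inward edge at position ℓ (i.e., ℓ and i are the two positions contributed by the same vertex) if and only if: (i) 1 ≤ ℓ ≤ i−1; (ii) t_i = t_ℓ + m; (iii) the number of inward symbols strictly between positions ℓ and i equals the number of outward symbols strictly between them; and (iv) ℓ is the largest index satisfying (i)–(iii). -/
inductive LTree : Type
  | node : ℕ → List LTree → LTree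

namespace LTree

/-- Euler string of a forest (ordered list of labeled subtrees). -/
def eulerF (m : ℕ) : List LTree → List ℕ
  | [] => []
  | node b cs :: rest => b :: (eulerF m cs ++ (b + m) :: eulerF m rest)

/-- Euler string of a single tree viewed as a forest element. -/
def eulerT (m : ℕ) (t : LTree) : List ℕ := eulerF m [t]

/-- Labels of all vertices of a forest. -/
def labelsF : List LTree → List ℕ
  | [] => []
  | node b cs :: rest => b :: (labelsF cs ++ labelsF rest)

/-- All labels lie in `{1, …, m}`. -/
def WFforest (m : ℕ) (f : List LTree) : Prop := ∀ b ∈ labelsF f, 1 ≤ b ∧ b ≤ m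

/-- Number of vertices of a forest (= number of non-root vertices of the tree). -/
def countF : List LTree → ℕ
  | [] => 0
  | node _ cs :: rest => 1 + countF cs + countF rest

/-- Matched pairs of (1-indexed) inward/outward positions in the Euler string,
together with the vertex contributing them, for a forest whose Euler string
starts at offset `o`. -/
def pairsV (m : ℕ) : List LTree → ℕ → List (LTree × ℕ × ℕ)
  | [], _ => []
  | node b cs :: rest, o =>
      (node b cs, o + 1, o + (eulerF m cs).length + 2) ::
        (pairsV m cs (o + 1) ++ pairsV m rest (o + (eulerF m cs).length + 2))

/-- Matched pairs of (1-indexed) inward/outward positions. -/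
def pairsF (m : ℕ) (f : List LTree) (o : ℕ) : List (ℕ × ℕ) :=
  (pairsV m f o).map Prod.snd

/-- Number of inward symbols (≤ m) strictly between 1-indexed positions ℓ and i. -/
def inBetween (m : ℕ) (s : List ℕ) (ℓ i : ℕ) : ℕ :=
  ((s.drop ℓ).take (i - ℓ - 1)).countP (fun t => decide (t ≤ m))

/-- Number of outward symbols (> m) strictly between 1-indexed positions ℓ and i. -/
def outBetween (m : ℕ) (s : List ℕ) (ℓ i : ℕ) : ℕ :=
  ((s.drop ℓ).take (i - ℓ - 1)).countP (fun t => decide (m < t))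

end LTree

/-!
If the vertex `node b cs` contributes the positions `(ℓ, i)`, the Euler string splits as
`p ++ b :: (E(cs) ++ (b + m) :: q)`, so the symbols strictly between `ℓ` and `i` form the
balanced word `E(cs)`. A later candidate `ℓ < ℓ' < i` would carry the inward symbol `b`, and the
part of `E(cs)` after it would be balanced; but every suffix of an Euler string has at least as
many outward as inward symbols. Conversely every outward symbol is contributed by some vertex,
whose inward position is then the largest candidate.
-/

namespace List

theorem take_drop_append_cons {α : Type*} (p e q : List α) (b c : α) {k : ℕ}
    (hk : k ≤ e.length) :
    ((p ++ b :: (e ++ c :: q)).drop (p.length + 1 + k)).take (e.length - k) = e.drop k := by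
  rw [drop_append, drop_eq_nil_of_le (by omega), nil_append,
    show p.length + 1 + k - p.length = k + 1 by omega, drop_succ_cons,
    drop_append_of_le_length hk]
  exact take_left' (by simp)

theorem getD_append_cons_append_cons {α : Type*} (p e q : List α) (b c d : α) (k : ℕ) :
    (p ++ b :: (e ++ c :: q)).getD (p.length + 1 + k) d = (e ++ c :: q).getD k d := by
  rw [getD_append_right _ _ _ _ (by omega), show p.length + 1 + k - p.length = k + 1 by omega,
    getD_cons_succ]

end List

namespace LTree

variable {m : ℕ}

theorem wfForest_cons_iff {b : ℕ} {cs rest : List LTree} :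
    WFforest m (node b cs :: rest) ↔ (1 ≤ b ∧ b ≤ m) ∧ WFforest m cs ∧ WFforest m rest := by
  simp only [WFforest, labelsF, List.mem_cons, List.mem_append, or_imp, forall_and,
    forall_eq]
  tauto

theorem exists_mem_labelsF_of_mem_eulerF :
    ∀ {f : List LTree} {t : ℕ}, t ∈ eulerF m f → ∃ b ∈ labelsF f, t = b ∨ t = b + m
  | [], _, ht => by simp [eulerF] at ht
  | node b cs :: rest, t, ht => by
    simp only [eulerF, List.mem_cons, List.mem_append] at ht
    rcases ht with rfl | ht | rfl | ht
    · exact ⟨t, by simp [labelsF], .inl rfl⟩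
    · obtain ⟨c, hc, ht⟩ := exists_mem_labelsF_of_mem_eulerF ht
      exact ⟨c, by simp [labelsF, hc], ht⟩
    · exact ⟨b, by simp [labelsF], .inr rfl⟩
    · obtain ⟨c, hc, ht⟩ := exists_mem_labelsF_of_mem_eulerF ht
      exact ⟨c, by simp [labelsF, hc], ht⟩

theorem countP_eulerF_inward_eq_outward :
    ∀ {f : List LTree}, WFforest m f →
      (eulerF m f).countP (fun t => decide (t ≤ m))
        = (eulerF m f).countP (fun t => decide (m < t))
  | [], _ => by simp [eulerF]
  | node b cs :: rest, hwf => by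
    obtain ⟨hb, hcs, hrest⟩ := wfForest_cons_iff.mp hwf
    have hcs := countP_eulerF_inward_eq_outward hcs
    have hrest := countP_eulerF_inward_eq_outward hrest
    simp only [eulerF, List.countP_cons, List.countP_append]
    split_ifs <;> simp_all <;> omega

theorem countP_drop_eulerF_inward_le_outward :
    ∀ {f : List LTree}, WFforest m f → ∀ k : ℕ,
      ((eulerF m f).drop k).countP (fun t => decide (t ≤ m))
        ≤ ((eulerF m f).drop k).countP (fun t => decide (m < t))
  | [], _, k => by simp [eulerF]
  | f@(_ :: _), hwf, 0 => (countP_eulerF_inward_eq_outward hwf).le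
  | node b cs :: rest, hwf, k + 1 => by
    obtain ⟨hb, hcs, hrest⟩ := wfForest_cons_iff.mp hwf
    simp only [eulerF, List.drop_succ_cons, List.drop_append, List.countP_append]
    cases hj : k - (eulerF m cs).length with
    | zero =>
      have := countP_drop_eulerF_inward_le_outward hcs k
      have := countP_eulerF_inward_eq_outward hrest
      simp only [List.drop_zero, List.countP_cons, decide_eq_true_eq]
      split_ifs <;> omega
    | succ j =>
      have := countP_drop_eulerF_inward_le_outward hrest j
      simp [List.drop_eq_nil_of_le (show (eulerF m cs).length ≤ k by omega), this]

theorem mem_pairsF_cons {b : ℕ} {cs rest : List LTree} {o ℓ i : ℕ} :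
    (ℓ, i) ∈ pairsF m (node b cs :: rest) o ↔
      (ℓ = o + 1 ∧ i = o + (eulerF m cs).length + 2) ∨ (ℓ, i) ∈ pairsF m cs (o + 1) ∨
        (ℓ, i) ∈ pairsF m rest (o + (eulerF m cs).length + 2) := by
  simp [pairsF, pairsV]

theorem exists_eulerF_eq_of_mem_pairsF :
    ∀ {f : List LTree} {o ℓ i : ℕ}, (ℓ, i) ∈ pairsF m f o →
      ∃ (p : List ℕ) (b : ℕ) (cs : List LTree) (q : List ℕ),
        eulerF m f = p ++ b :: (eulerF m cs ++ (b + m) :: q) ∧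
        b ∈ labelsF f ∧ labelsF cs ⊆ labelsF f ∧
        ℓ = o + p.length + 1 ∧ i = o + p.length + (eulerF m cs).length + 2
  | [], _, _, _, h => by simp [pairsF, pairsV] at h
  | node b cs :: rest, o, ℓ, i, h => by
    rcases mem_pairsF_cons.mp h with ⟨rfl, rfl⟩ | h | h
    · exact ⟨[], b, cs, eulerF m rest, by simp [eulerF], by simp [labelsF],
        fun x hx => by simp [labelsF, hx], by simp, by simp⟩
    · obtain ⟨p, b', cs', q, he, hb, hsub, rfl, rfl⟩ := exists_eulerF_eq_of_mem_pairsF h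
      refine ⟨b :: p, b', cs', q ++ (b + m) :: eulerF m rest, by simp [eulerF, he],
        by simp [labelsF, hb], fun x hx => by simp [labelsF, hsub hx], by simp; omega,
        by simp; omega⟩
    · obtain ⟨p, b', cs', q, he, hb, hsub, rfl, rfl⟩ := exists_eulerF_eq_of_mem_pairsF h
      refine ⟨b :: (eulerF m cs ++ (b + m) :: p), b', cs', q, by simp [eulerF, he],
        by simp [labelsF, hb], fun x hx => by simp [labelsF, hsub hx], by simp; omega,
        by simp; omega⟩

theorem exists_mem_pairsF_of_lt_getD :
    ∀ {f : List LTree}, WFforest m f → ∀ (o j : ℕ), m < (eulerF m f).getD j 0 →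
      ∃ ℓ, (ℓ, o + j + 1) ∈ pairsF m f o
  | [], _, _, _, hout => by simp [eulerF] at hout
  | node b cs :: rest, hwf, o, 0, hout => by
    simp only [eulerF, List.getD_cons_zero] at hout
    have := (wfForest_cons_iff.mp hwf).1.2
    omega
  | node b cs :: rest, hwf, o, j + 1, hout => by
    obtain ⟨_, hcs, hrest⟩ := wfForest_cons_iff.mp hwf
    simp only [eulerF, List.getD_cons_succ] at hout
    rcases lt_trichotomy j (eulerF m cs).length with hlt | rfl | hgt
    · rw [List.getD_append _ _ _ _ hlt] at hout
      obtain ⟨ℓ, hℓ⟩ := exists_mem_pairsF_of_lt_getD hcs (o + 1) j hout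
      exact ⟨ℓ, mem_pairsF_cons.mpr (.inr (.inl (by convert hℓ using 3; omega)))⟩
    · exact ⟨o + 1, mem_pairsF_cons.mpr (.inl ⟨rfl, by omega⟩)⟩
    · obtain ⟨k, rfl⟩ : ∃ k, j = (eulerF m cs).length + k + 1 :=
        ⟨j - (eulerF m cs).length - 1, by omega⟩
      rw [List.getD_append_right _ _ _ _ (by omega), show (eulerF m cs).length + k + 1
        - (eulerF m cs).length = k + 1 by omega, List.getD_cons_succ] at hout
      obtain ⟨ℓ, hℓ⟩ := exists_mem_pairsF_of_lt_getD hrest (o + (eulerF m cs).length + 2) k hout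
      exact ⟨ℓ, mem_pairsF_cons.mpr (.inr (.inr (by convert hℓ using 3; omega)))⟩

/-- Conditions (ii) and (iii) of the characterization, for 1-indexed positions `ℓ < i`. -/
def IsMatchCandidate (m : ℕ) (s : List ℕ) (ℓ i : ℕ) : Prop :=
  s.getD (i - 1) 0 = s.getD (ℓ - 1) 0 + m ∧ inBetween m s ℓ i = outBetween m s ℓ i

theorem isMatchCandidate_of_mem_pairsF {f : List LTree} (hwf : WFforest m f) {ℓ i : ℕ}
    (h : (ℓ, i) ∈ pairsF m f 0) :
    1 ≤ ℓ ∧ ℓ < i ∧ IsMatchCandidate m (eulerF m f) ℓ i ∧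
      ∀ ℓ', ℓ < ℓ' → ℓ' < i → ¬IsMatchCandidate m (eulerF m f) ℓ' i := by
  obtain ⟨p, b, cs, q, hs, hb, hsub, hℓ, hi⟩ := exists_eulerF_eq_of_mem_pairsF h
  rw [Nat.zero_add] at hℓ hi
  subst hℓ hi
  have hcs : WFforest m cs := fun x hx => hwf x (hsub hx)
  set e := eulerF m cs
  have hseg : ∀ k ≤ e.length, ((eulerF m f).drop (p.length + 1 + k)).take
      (p.length + e.length + 2 - (p.length + 1 + k) - 1) = e.drop k := fun k hk => by
    rw [hs, show p.length + e.length + 2 - (p.length + 1 + k) - 1 = e.length - k by omega]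
    exact List.take_drop_append_cons p e q b (b + m) hk
  have hgetD : ∀ k, (eulerF m f).getD (p.length + 1 + k) 0 = (e ++ (b + m) :: q).getD k 0 :=
    fun k => by rw [hs, List.getD_append_cons_append_cons]
  have hgetD_i : (eulerF m f).getD (p.length + e.length + 2 - 1) 0 = b + m := by
    rw [show p.length + e.length + 2 - 1 = p.length + 1 + e.length by omega, hgetD,
      List.getD_append_right _ _ _ _ le_rfl, Nat.sub_self, List.getD_cons_zero]
  refine ⟨by omega, by omega, ⟨?_, ?_⟩, ?_⟩
  · rw [hgetD_i, hs, Nat.add_sub_cancel,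
      List.getD_append_right _ _ _ _ le_rfl, Nat.sub_self, List.getD_cons_zero]
  · have hseg₀ := hseg 0 (Nat.zero_le _)
    simpa only [inBetween, outBetween, Nat.add_zero, hseg₀, List.drop_zero]
      using countP_eulerF_inward_eq_outward hcs
  · rintro ℓ' hℓ hi ⟨hsym, hcount⟩
    obtain ⟨k, rfl⟩ : ∃ k, ℓ' = p.length + 1 + (k + 1) := ⟨ℓ' - p.length - 2, by omega⟩
    have hk : k < e.length := by omega
    have hek : e[k] = b := by
      rw [hgetD_i, show p.length + 1 + (k + 1) - 1 = p.length + 1 + k by omega, hgetD,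
        List.getD_append _ _ _ _ hk, List.getD_eq_getElem _ _ hk] at hsym
      omega
    have hsuffix : (e.drop k).countP (fun t => decide (t ≤ m))
        ≤ (e.drop k).countP (fun t => decide (m < t)) :=
      countP_drop_eulerF_inward_le_outward hcs k
    simp only [inBetween, outBetween, hseg (k + 1) hk] at hcount
    simp only [List.drop_eq_getElem_cons hk, List.countP_cons, hek, (hwf b hb).2, decide_true,
      if_true, Nat.not_lt.mpr (hwf b hb).2, decide_false, Bool.false_eq_true, if_false] at hsuffix
    omega

end LTree

theorem matching_characterization_general (m : ℕ) (f : List LTree)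
    (hwf : LTree.WFforest m f) (ℓ i : ℕ)
    (hi2 : i ≤ (LTree.eulerF m f).length) :
    (ℓ, i) ∈ LTree.pairsF m f 0 ↔
      (1 ≤ ℓ ∧ ℓ ≤ i - 1 ∧
        (LTree.eulerF m f).getD (i - 1) 0 = (LTree.eulerF m f).getD (ℓ - 1) 0 + m ∧
        LTree.inBetween m (LTree.eulerF m f) ℓ i =
          LTree.outBetween m (LTree.eulerF m f) ℓ i ∧
        ∀ ℓ', ℓ < ℓ' → ℓ' ≤ i - 1 →
          ¬((LTree.eulerF m f).getD (i - 1) 0 = (LTree.eulerF m f).getD (ℓ' - 1) 0 + m ∧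
            LTree.inBetween m (LTree.eulerF m f) ℓ' i =
              LTree.outBetween m (LTree.eulerF m f) ℓ' i)) := by
  constructor
  · intro h
    obtain ⟨hℓ, hℓi, ⟨hsym, hcount⟩, hmax⟩ := LTree.isMatchCandidate_of_mem_pairsF hwf h
    exact ⟨hℓ, by omega, hsym, hcount, fun ℓ' h₁ h₂ => hmax ℓ' h₁ (by omega)⟩
  · rintro ⟨hℓ, hℓi, hsym, hcount, hmax⟩
    have hℓ_lt : ℓ - 1 < (LTree.eulerF m f).length := by omega
    obtain ⟨b, hb, hsymℓ⟩ := LTree.exists_mem_labelsF_of_mem_eulerF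
      (List.getD_eq_getElem _ 0 hℓ_lt ▸ List.getElem_mem hℓ_lt)
    have hb1 := (hwf b hb).1
    obtain ⟨ℓ₀, h₀⟩ := LTree.exists_mem_pairsF_of_lt_getD hwf 0 (i - 1) (by omega)
    rw [show 0 + (i - 1) + 1 = i by omega] at h₀
    obtain ⟨-, hℓ₀i, hmatch₀, hmax₀⟩ := LTree.isMatchCandidate_of_mem_pairsF hwf h₀
    rcases lt_trichotomy ℓ ℓ₀ with hlt | rfl | hgt
    · exact absurd hmatch₀ (hmax ℓ₀ hlt (by omega))
    · exact h₀
    · exact absurd ⟨hsym, hcount⟩ (hmax₀ ℓ hgt (by omega))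

theorem matching_characterization (m : ℕ) (hm : 1 ≤ m) (f : List LTree)
    (hwf : LTree.WFforest m f) (ℓ i : ℕ) (hi1 : 1 ≤ i)
    (hi2 : i ≤ (LTree.eulerF m f).length) :
    (ℓ, i) ∈ LTree.pairsF m f 0 ↔
      (1 ≤ ℓ ∧ ℓ ≤ i - 1 ∧
        (LTree.eulerF m f).getD (i - 1) 0 = (LTree.eulerF m f).getD (ℓ - 1) 0 + m ∧
        LTree.inBetween m (LTree.eulerF m f) ℓ i =
          LTree.outBetween m (LTree.eulerF m f) ℓ i ∧
        ∀ ℓ', ℓ < ℓ' → ℓ' ≤ i - 1 →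
          ¬((LTree.eulerF m f).getD (i - 1) 0 = (LTree.eulerF m f).getD (ℓ' - 1) 0 + m ∧
            LTree.inBetween m (LTree.eulerF m f) ℓ' i =
              LTree.outBetween m (LTree.eulerF m f) ℓ' i)) :=
  matching_characterization_general m f hwf ℓ i hi2
end

section
/- Leaf deletion acts locally on the Euler string: let T be a rooted ordered labeled tree and v a leaf (non-root vertex with no children) whose inward and outward edges occupy consecutive positions ℓ and ℓ+1 of E(T). If U is the tree obtained from T by deleting v, then E(U) is obtained from E(T) by deleting the two symbols at positions ℓ and ℓ+1. -/
namespace LTree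

/-- `DeleteLeafAt m f ℓ g`: `g` is obtained from `f` by deleting a leaf whose inward and
outward edges occupy the consecutive (1-indexed) positions `ℓ` and `ℓ+1`. -/
inductive DeleteLeafAt (m : ℕ) : List LTree → ℕ → List LTree → Prop
  | here {b : ℕ} {rest : List LTree} : DeleteLeafAt m (node b [] :: rest) 1 rest
  | child {b p : ℕ} {cs cs' rest : List LTree} :
      DeleteLeafAt m cs p cs' →
      DeleteLeafAt m (node b cs :: rest) (p + 1) (node b cs' :: rest)
  | tail {p : ℕ} {t : LTree} {rest rest' : List LTree} :
      DeleteLeafAt m rest p rest' →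
      DeleteLeafAt m (t :: rest) (p + (eulerT m t).length) (t :: rest')

end LTree

namespace LTree

theorem eulerF_cons (m : ℕ) (t : LTree) (rest : List LTree) :
    eulerF m (t :: rest) = eulerT m t ++ eulerF m rest := by
  obtain ⟨b, cs⟩ := t
  simp [eulerT, eulerF]

theorem length_eulerT_node (m b : ℕ) (cs : List LTree) :
    (eulerT m (node b cs)).length = (eulerF m cs).length + 2 := by
  simp [eulerT, eulerF]

theorem pairsF_node_cons (m b : ℕ) (cs rest : List LTree) (o : ℕ) :
    pairsF m (node b cs :: rest) o =
      (o + 1, o + (eulerF m cs).length + 2) ::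
        (pairsF m cs (o + 1) ++ pairsF m rest (o + (eulerF m cs).length + 2)) := by
  simp [pairsF, pairsV]

namespace DeleteLeafAt

variable {m : ℕ} {f g : List LTree} {ℓ : ℕ}

theorem exists_eulerF_eq (h : DeleteLeafAt m f ℓ g) :
    ∃ pre post : List ℕ, ∃ b : ℕ, pre.length + 1 = ℓ ∧
      eulerF m f = pre ++ b :: (b + m) :: post ∧ eulerF m g = pre ++ post := by
  induction h with
  | @here b rest => exact ⟨[], eulerF m rest, b, rfl, by simp [eulerF], rfl⟩
  | @child b p cs cs' rest _ ih =>
    obtain ⟨pre, post, c, hlen, hf, hg⟩ := ih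
    refine ⟨b :: pre, post ++ (b + m) :: eulerF m rest, c, by simp [hlen], ?_, ?_⟩ <;>
      simp [eulerF, hf, hg]
  | @tail _ t _ _ _ ih =>
    obtain ⟨pre, post, c, hlen, hf, hg⟩ := ih
    refine ⟨eulerT m t ++ pre, post, c, by rw [List.length_append, ← hlen]; omega, ?_, ?_⟩ <;>
      simp [eulerF_cons, hf, hg]

theorem eulerF_eq_take_append_drop (h : DeleteLeafAt m f ℓ g) :
    eulerF m g = (eulerF m f).take (ℓ - 1) ++ (eulerF m f).drop (ℓ + 1) := by
  obtain ⟨pre, post, b, rfl, hf, hg⟩ := h.exists_eulerF_eq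
  simp [hf, hg, List.drop_append, Nat.add_assoc]

theorem mem_pairsF (h : DeleteLeafAt m f ℓ g) (o : ℕ) : (o + ℓ, o + ℓ + 1) ∈ pairsF m f o := by
  induction h generalizing o with
  | here => simp [pairsF_node_cons, eulerF]
  | child _ ih =>
    rw [pairsF_node_cons]
    refine List.mem_cons_of_mem _ (List.mem_append_left _ ?_)
    convert ih (o + 1) using 2 <;> omega
  | @tail _ t _ _ _ ih =>
    obtain ⟨b, cs⟩ := t
    rw [pairsF_node_cons, length_eulerT_node]
    refine List.mem_cons_of_mem _ (List.mem_append_right _ ?_)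
    convert ih (o + (eulerF m cs).length + 2) using 2 <;> omega

end DeleteLeafAt

end LTree

theorem deleteLeaf_euler (m : ℕ) (f g : List LTree) (ℓ : ℕ)
    (h : LTree.DeleteLeafAt m f ℓ g) :
    (ℓ, ℓ + 1) ∈ LTree.pairsF m f 0 ∧
    LTree.eulerF m g = (LTree.eulerF m f).take (ℓ - 1) ++ (LTree.eulerF m f).drop (ℓ + 1)
    := by
  refine ⟨?_, h.eulerF_eq_take_append_drop⟩
  simpa using h.mem_pairsF 0
end

section
/- If trees T and U over alphabet {1,…,m} have tree edit distance at most d (with unit-cost substitution, deletion, and insertion of vertices), then the string edit distance between their Euler strings E(T) and E(U) is at most 2d. -/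
namespace LTree

/-- Relabeling of a single vertex. -/
inductive Relabel : List LTree → List LTree → Prop
  | here {b c : ℕ} {cs rest : List LTree} :
      Relabel (node b cs :: rest) (node c cs :: rest)
  | child {b : ℕ} {cs cs' rest : List LTree} :
      Relabel cs cs' → Relabel (node b cs :: rest) (node b cs' :: rest)
  | tail {t : LTree} {rest rest' : List LTree} :
      Relabel rest rest' → Relabel (t :: rest) (t :: rest')

/-- Deletion of a single (non-root) vertex: its children take its place, in order. -/
inductive DeleteV : List LTree → List LTree → Prop
  | here {b : ℕ} {cs rest : List LTree} : DeleteV (node b cs :: rest) (cs ++ rest)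
  | child {b : ℕ} {cs cs' rest : List LTree} :
      DeleteV cs cs' → DeleteV (node b cs :: rest) (node b cs' :: rest)
  | tail {t : LTree} {rest rest' : List LTree} :
      DeleteV rest rest' → DeleteV (t :: rest) (t :: rest')

/-- One tree edit operation: substitution, deletion, or insertion (inverse of deletion). -/
def TreeStep (s t : List LTree) : Prop := Relabel s t ∨ DeleteV s t ∨ DeleteV t s

/-- Tree edit distance at most `d`. -/
def TreeEditLe : ℕ → List LTree → List LTree → Prop
  | 0, s, t => s = t
  | d + 1, s, t => s = t ∨ ∃ u, TreeStep s u ∧ TreeEditLe d u t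

end LTree

/-- One string edit operation: substitution, deletion, or insertion of a symbol. -/
inductive EditStep : List ℕ → List ℕ → Prop
  | subst (u w : List ℕ) (a b : ℕ) : EditStep (u ++ a :: w) (u ++ b :: w)
  | delete (u w : List ℕ) (a : ℕ) : EditStep (u ++ a :: w) (u ++ w)
  | insert (u w : List ℕ) (a : ℕ) : EditStep (u ++ w) (u ++ a :: w)

/-- String edit distance at most `d`. -/
def EditLe : ℕ → List ℕ → List ℕ → Prop
  | 0, s, t => s = t
  | d + 1, s, t => s = t ∨ ∃ u, EditStep s u ∧ EditLe d u t

/-!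
Each tree edit changes the Euler string by at most two symbol edits. Relabeling a vertex `v`
substitutes its entry symbol `b` and its exit symbol `b + m`; deleting `v` removes exactly these
two symbols, since the Euler string of `v`'s children is already the block between them; an
insertion is the reverse of a deletion. Composing `d` tree edits gives at most `2 d` string edits.
-/

theorem EditStep.symm {s t : List ℕ} (h : EditStep s t) : EditStep t s := by
  cases h with
  | subst u w a b => exact .subst u w b a
  | delete u w a => exact .insert u w a
  | insert u w a => exact .delete u w a

theorem EditStep.append_append (p q : List ℕ) {s t : List ℕ} (h : EditStep s t) :
    EditStep (p ++ s ++ q) (p ++ t ++ q) := by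
  cases h with
  | subst u w a b => simpa using EditStep.subst (p ++ u) (w ++ q) a b
  | delete u w a => simpa using EditStep.delete (p ++ u) (w ++ q) a
  | insert u w a => simpa using EditStep.insert (p ++ u) (w ++ q) a

namespace EditLe

theorem refl : ∀ (d : ℕ) (s : List ℕ), EditLe d s s
  | 0, _ => rfl
  | _ + 1, _ => Or.inl rfl

theorem succ {d : ℕ} {s t : List ℕ} (h : EditLe d s t) : EditLe (d + 1) s t := by
  induction d generalizing s with
  | zero => exact Or.inl h
  | succ d ih =>
    rcases h with rfl | ⟨u, hsu, hut⟩
    · exact Or.inl rfl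
    · exact Or.inr ⟨u, hsu, ih hut⟩

theorem mono {d d' : ℕ} {s t : List ℕ} (hd : d ≤ d') (h : EditLe d s t) : EditLe d' s t := by
  induction hd with
  | refl => exact h
  | step _ ih => exact ih.succ

theorem of_editStep {s t : List ℕ} (h : EditStep s t) : EditLe 1 s t :=
  Or.inr ⟨t, h, rfl⟩

theorem trans {d₁ d₂ : ℕ} {s t u : List ℕ} (h₁ : EditLe d₁ s t) (h₂ : EditLe d₂ t u) :
    EditLe (d₁ + d₂) s u := by
  induction d₁ generalizing s with
  | zero => cases h₁; simpa using h₂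
  | succ d ih =>
    rcases h₁ with rfl | ⟨v, hsv, hvt⟩
    · exact h₂.mono (by omega)
    · rw [Nat.add_right_comm]
      exact Or.inr ⟨v, hsv, ih hvt⟩

theorem symm {d : ℕ} {s t : List ℕ} (h : EditLe d s t) : EditLe d t s := by
  induction d generalizing s with
  | zero => exact Eq.symm h
  | succ d ih =>
    rcases h with rfl | ⟨u, hsu, hut⟩
    · exact Or.inl rfl
    · exact (ih hut).trans (of_editStep hsu.symm)

theorem append_append (p q : List ℕ) {d : ℕ} {s t : List ℕ} (h : EditLe d s t) :
    EditLe d (p ++ s ++ q) (p ++ t ++ q) := by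
  induction d generalizing s with
  | zero => cases h; rfl
  | succ d ih =>
    rcases h with rfl | ⟨u, hsu, hut⟩
    · exact Or.inl rfl
    · exact Or.inr ⟨p ++ u ++ q, hsu.append_append p q, ih hut⟩

end EditLe

namespace LTree

theorem eulerF_append (m : ℕ) (f g : List LTree) :
    eulerF m (f ++ g) = eulerF m f ++ eulerF m g := by
  induction f with
  | nil => simp [eulerF]
  | cons t rest ih =>
    obtain ⟨b, cs⟩ := t
    simp [eulerF, ih]

theorem editLe_eulerF_child (m b : ℕ) {k : ℕ} {cs cs' : List LTree} (rest : List LTree)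
    (h : EditLe k (eulerF m cs) (eulerF m cs')) :
    EditLe k (eulerF m (node b cs :: rest)) (eulerF m (node b cs' :: rest)) := by
  simpa [eulerF] using h.append_append [b] ((b + m) :: eulerF m rest)

theorem editLe_eulerF_tail (m : ℕ) {k : ℕ} (t : LTree) {rest rest' : List LTree}
    (h : EditLe k (eulerF m rest) (eulerF m rest')) :
    EditLe k (eulerF m (t :: rest)) (eulerF m (t :: rest')) := by
  obtain ⟨b, cs⟩ := t
  simpa [eulerF] using h.append_append (b :: (eulerF m cs ++ [b + m])) []

theorem editLe_eulerF_of_relabel (m : ℕ) {f g : List LTree} (h : Relabel f g) :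
    EditLe 2 (eulerF m f) (eulerF m g) := by
  induction h with
  | @here b c cs rest =>
    have entry : EditStep (eulerF m (node b cs :: rest))
        (c :: (eulerF m cs ++ (b + m) :: eulerF m rest)) := by
      simpa [eulerF] using EditStep.subst [] (eulerF m cs ++ (b + m) :: eulerF m rest) b c
    have exit : EditStep (c :: (eulerF m cs ++ (b + m) :: eulerF m rest))
        (eulerF m (node c cs :: rest)) := by
      simpa [eulerF] using EditStep.subst (c :: eulerF m cs) (eulerF m rest) (b + m) (c + m)
    exact (EditLe.of_editStep entry).trans (EditLe.of_editStep exit)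
  | child _ ih => exact editLe_eulerF_child m _ _ ih
  | tail _ ih => exact editLe_eulerF_tail m _ ih

theorem editLe_eulerF_of_deleteV (m : ℕ) {f g : List LTree} (h : DeleteV f g) :
    EditLe 2 (eulerF m f) (eulerF m g) := by
  induction h with
  | @here b cs rest =>
    have entry : EditStep (eulerF m (node b cs :: rest))
        (eulerF m cs ++ (b + m) :: eulerF m rest) := by
      simpa [eulerF] using EditStep.delete [] (eulerF m cs ++ (b + m) :: eulerF m rest) b
    have exit : EditStep (eulerF m cs ++ (b + m) :: eulerF m rest) (eulerF m (cs ++ rest)) := by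
      simpa [eulerF_append] using EditStep.delete (eulerF m cs) (eulerF m rest) (b + m)
    exact (EditLe.of_editStep entry).trans (EditLe.of_editStep exit)
  | child _ ih => exact editLe_eulerF_child m _ _ ih
  | tail _ ih => exact editLe_eulerF_tail m _ ih

theorem editLe_eulerF_of_treeStep (m : ℕ) {f g : List LTree} (h : TreeStep f g) :
    EditLe 2 (eulerF m f) (eulerF m g) := by
  rcases h with h | h | h
  · exact editLe_eulerF_of_relabel m h
  · exact editLe_eulerF_of_deleteV m h
  · exact (editLe_eulerF_of_deleteV m h).symm

end LTree

theorem tree_edit_to_string_edit_general (m d : ℕ) (f g : List LTree)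
    (h : LTree.TreeEditLe d f g) :
    EditLe (2 * d) (LTree.eulerF m f) (LTree.eulerF m g) := by
  induction d generalizing f with
  | zero => cases h; rfl
  | succ d ih =>
    rcases h with rfl | ⟨u, hfu, hug⟩
    · exact EditLe.refl _ _
    · exact ((LTree.editLe_eulerF_of_treeStep m hfu).trans (ih u hug)).mono (by omega)

theorem tree_edit_to_string_edit (m d : ℕ) (hm : 1 ≤ m) (f g : List LTree)
    (hf : LTree.WFforest m f) (hg : LTree.WFforest m g) (h : LTree.TreeEditLe d f g) :
    EditLe (2 * d) (LTree.eulerF m f) (LTree.eulerF m g) :=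
  tree_edit_to_string_edit_general m d f g h
end
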